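/- arXiv:2104.06327 — 3 statements merged into one kernel-verified Lean document; each statement's English description precedes it below -/
import Mathlib

section
/- Let q₁, q₂, q₃ > 0 satisfy q₁q₃ - q₂² > 0 and (9/25)·q₂²(q₁q₃ + q₂²)/(q₁q₃ - q₂²)² < 1. Then for every 2×2 real symmetric matrix C = [[c₁₁, c₁₂],[c₁₂, c₂₂]] with c₁₁c₂₂ > 0, one has q₁²c₁₁² + (2q₁q₃ + 2q₂²)c₁₂² + q₃²c₂₂² + 4q₁q₂c₁₁c₁₂ + 4q₂q₃c₁₂c₂₂ + 2q₂²c₁₁c₂₂ ≥ 2c₁₁c₂₂(q₁q₃ - q₂²)²/(q₁q₃ + q₂²). -/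
/-!
Multiplying `Tr(QCQC)` by `q₁q₃ + q₂²` and completing the square in `c₁₂` gives the identity
`(q₁q₃ + q₂²) Tr(QCQC) = 2 ((q₁q₃ + q₂²) c₁₂ + q₂ (q₁c₁₁ + q₃c₂₂))² + det Q (q₁c₁₁ - q₃c₂₂)²
  + 2 c₁₁c₂₂ (det Q)²`, whose first two terms are nonnegative once `det Q ≥ 0`.
-/

theorem mul_trace_QCQC_eq_sum_sq (q₁ q₂ q₃ c₁₁ c₁₂ c₂₂ : ℝ) :
    (q₁ * q₃ + q₂ ^ 2) * (q₁ ^ 2 * c₁₁ ^ 2 + (2 * q₁ * q₃ + 2 * q₂ ^ 2) * c₁₂ ^ 2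
        + q₃ ^ 2 * c₂₂ ^ 2 + 4 * q₁ * q₂ * c₁₁ * c₁₂ + 4 * q₂ * q₃ * c₁₂ * c₂₂
        + 2 * q₂ ^ 2 * c₁₁ * c₂₂)
      = 2 * ((q₁ * q₃ + q₂ ^ 2) * c₁₂ + q₂ * (q₁ * c₁₁ + q₃ * c₂₂)) ^ 2
        + (q₁ * q₃ - q₂ ^ 2) * (q₁ * c₁₁ - q₃ * c₂₂) ^ 2
        + 2 * c₁₁ * c₂₂ * (q₁ * q₃ - q₂ ^ 2) ^ 2 := by
  ring

theorem stmt7_general (q₁ q₂ q₃ : ℝ)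
    (hdet : 0 < q₁ * q₃ - q₂ ^ 2)
    (c₁₁ c₁₂ c₂₂ : ℝ) :
    q₁ ^ 2 * c₁₁ ^ 2 + (2 * q₁ * q₃ + 2 * q₂ ^ 2) * c₁₂ ^ 2 + q₃ ^ 2 * c₂₂ ^ 2
        + 4 * q₁ * q₂ * c₁₁ * c₁₂ + 4 * q₂ * q₃ * c₁₂ * c₂₂ + 2 * q₂ ^ 2 * c₁₁ * c₂₂
      ≥ 2 * c₁₁ * c₂₂ * (q₁ * q₃ - q₂ ^ 2) ^ 2 / (q₁ * q₃ + q₂ ^ 2) := by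
  have hsum : 0 < q₁ * q₃ + q₂ ^ 2 := by linarith [sq_nonneg q₂]
  rw [ge_iff_le, div_le_iff₀' hsum, mul_trace_QCQC_eq_sum_sq]
  have hsq := sq_nonneg ((q₁ * q₃ + q₂ ^ 2) * c₁₂ + q₂ * (q₁ * c₁₁ + q₃ * c₂₂))
  have hdet_sq := mul_nonneg hdet.le (sq_nonneg (q₁ * c₁₁ - q₃ * c₂₂))
  linarith

/-- Trace estimate for `Tr(QCQC)` with `Q = [[q₁,q₂],[q₂,q₃]]` and a symmetric matrix `C`
with `c₁₁c₂₂ > 0`. -/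
theorem stmt7 (q₁ q₂ q₃ : ℝ) (hq₁ : 0 < q₁) (hq₂ : 0 < q₂) (hq₃ : 0 < q₃)
    (hdet : 0 < q₁ * q₃ - q₂ ^ 2)
    (hcond : (9 / 25) * (q₂ ^ 2 * (q₁ * q₃ + q₂ ^ 2)) / (q₁ * q₃ - q₂ ^ 2) ^ 2 < 1)
    (c₁₁ c₁₂ c₂₂ : ℝ) (hc : 0 < c₁₁ * c₂₂) :
    q₁ ^ 2 * c₁₁ ^ 2 + (2 * q₁ * q₃ + 2 * q₂ ^ 2) * c₁₂ ^ 2 + q₃ ^ 2 * c₂₂ ^ 2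
        + 4 * q₁ * q₂ * c₁₁ * c₁₂ + 4 * q₂ * q₃ * c₁₂ * c₂₂ + 2 * q₂ ^ 2 * c₁₁ * c₂₂
      ≥ 2 * c₁₁ * c₂₂ * (q₁ * q₃ - q₂ ^ 2) ^ 2 / (q₁ * q₃ + q₂ ^ 2) :=
  stmt7_general q₁ q₂ q₃ hdet c₁₁ c₁₂ c₂₂
end

section
/- Let X be a Banach space, μ a finite Borel measure on X, and j: X* → L²(X, μ) the map j(x*)(x) = ⟨x, x*⟩ (assumed well-defined). Define R: L²(X, μ) → (X*)' by [R(f)](x*) = ∫_X f·j(x*) dμ. If for every f in the L²-closure of j(X*), the set R(f)⁻¹(0) ∩ B_{X*} is weak-star sequentially closed, and X is separable, then R(f) is represented by an element of X; i.e., there exists 𝓡(f) ∈ X with ⟨𝓡(f), x*⟩ = ∫_X f·j(x*) dμ for all x* ∈ X*. -/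
open MeasureTheory Filter Topology

/-- Auxiliary: a linear functional on the dual which is `ε`-small on the annihilator of a
finite set of vectors is within `ε` of evaluation at an element of the space. -/
lemma dual_approx {X : Type*} [NormedAddCommGroup X] [NormedSpace ℝ X]
    {N : ℕ} (vv : Fin N → X) (Φ : (X →L[ℝ] ℝ) →ₗ[ℝ] ℝ) {ε : ℝ} (hε : 0 ≤ ε)
    (hN : ∀ x' : X →L[ℝ] ℝ, (∀ i, x' (vv i) = 0) → |Φ x'| ≤ ε * ‖x'‖) :
    ∃ y : X, ∀ x' : X →L[ℝ] ℝ, |Φ x' - x' y| ≤ ε * ‖x'‖ := by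
  classical
  set L : Fin N → (X →L[ℝ] ℝ) →ₗ[ℝ] ℝ :=
    fun i => (ContinuousLinearMap.apply ℝ ℝ (vv i)).toLinearMap with hL
  set P : Submodule ℝ (X →L[ℝ] ℝ) := ⨅ i : Fin N, LinearMap.ker (L i) with hP
  have hPmem : ∀ x' : X →L[ℝ] ℝ, x' ∈ P ↔ ∀ i : Fin N, x' (vv i) = 0 := by
    intro x'
    simp [hP, Submodule.mem_iInf, LinearMap.mem_ker, hL]
  set φP : P →L[ℝ] ℝ := LinearMap.mkContinuous (𝕜 := ℝ) (E := P) (F := ℝ) (Φ.domRestrict P) ε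
    (fun x => by
      simp only [LinearMap.domRestrict_apply, Real.norm_eq_abs]
      exact hN x ((hPmem x).1 x.2)) with hφP
  obtain ⟨g, hg, hgnorm⟩ := exists_extension_norm_eq P φP
  have hgle : ‖g‖ ≤ ε := by
    rw [hgnorm]
    exact LinearMap.mkContinuous_norm_le _ hε _
  set χ : (X →L[ℝ] ℝ) →ₗ[ℝ] ℝ := Φ - (g : (X →L[ℝ] ℝ) →ₗ[ℝ] ℝ) with hχ
  have hker_le : (⨅ i : Fin N, LinearMap.ker (L i)) ≤ LinearMap.ker χ := by
    intro x' hx'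
    have hx'P : x' ∈ P := hx'
    rw [LinearMap.mem_ker, hχ, LinearMap.sub_apply]
    have h := hg ⟨x', hx'P⟩
    simp only [ContinuousLinearMap.coe_coe]
    rw [h]
    simp [hφP]
  have hspan := mem_span_of_iInf_ker_le_ker hker_le
  obtain ⟨c, hc⟩ := (Submodule.mem_span_range_iff_exists_fun ℝ).1 hspan
  refine ⟨∑ i : Fin N, c i • vv i, fun x' => ?_⟩
  have h1 : χ x' = x' (∑ i : Fin N, c i • vv i) := by
    rw [← hc]
    simp [hL, map_sum, _root_.map_smul, mul_comm]
  have h2 : χ x' = Φ x' - g x' := by simp [hχ]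
  have h3 : Φ x' - x' (∑ i : Fin N, c i • vv i) = g x' := by
    rw [← h1, h2]; ring
  rw [h3]
  calc |g x'| ≤ ‖g‖ * ‖x'‖ := g.le_opNorm x'
    _ ≤ ε * ‖x'‖ := mul_le_mul_of_nonneg_right hgle (norm_nonneg _)

/-- Let `X` be a separable Banach space, `μ` a finite Borel measure on `X` such that every
`x* ∈ X*` is square integrable, and `f ∈ L²(X,μ)` in the `L²`-closure of `j(X*)`, where
`j(x*)(x) = ⟨x, x*⟩`. If the set `R(f)⁻¹(0) ∩ B_{X*}` is weak-star sequentially closed, where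
`[R(f)](x*) = ∫ f · j(x*) dμ`, then `R(f)` is represented by an element of `X`. -/
theorem stmt13 {X : Type*} [NormedAddCommGroup X] [NormedSpace ℝ X] [CompleteSpace X]
    [TopologicalSpace.SeparableSpace X] [MeasurableSpace X] [BorelSpace X]
    (μ : Measure X) [IsFiniteMeasure μ]
    (hj : ∀ x' : X →L[ℝ] ℝ, MemLp (fun x => x' x) 2 μ)
    (f : X → ℝ) (hf : MemLp f 2 μ)
    (hclos : ∀ ε : ℝ, 0 < ε → ∃ x' : X →L[ℝ] ℝ, ∫ x, (f x - x' x) ^ 2 ∂μ < ε)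
    (hker : ∀ (g : ℕ → WeakDual ℝ X) (g' : WeakDual ℝ X),
      (∀ n, ‖WeakDual.toStrongDual (g n)‖ ≤ 1) → (∀ n, ∫ x, f x * g n x ∂μ = 0) →
      Filter.Tendsto g Filter.atTop (nhds g') → ∫ x, f x * g' x ∂μ = 0) :
    ∃ y : X, ∀ x' : X →L[ℝ] ℝ, x' y = ∫ x, f x * x' x ∂μ := by
  classical
  set φ : (X →L[ℝ] ℝ) → ℝ := fun x' => ∫ x, f x * x' x ∂μ with hφdef
  -- integrability of the products
  have hint : ∀ x' : X →L[ℝ] ℝ, Integrable (fun x => f x * x' x) μ := by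
    intro x'
    have h1 : MemLp ((fun x => x' x) • f) 1 μ := by
      exact hf.smul (hj x')
    have h2 : Integrable ((fun x => x' x) • f) μ := h1.integrable le_rfl
    have heq : ((fun x => x' x) • f) = fun x => f x * x' x := by
      funext x; simp [mul_comm]
    rwa [heq] at h2
  -- linearity of φ
  have φ_add : ∀ a b : X →L[ℝ] ℝ, φ (a + b) = φ a + φ b := by
    intro a b
    simp only [hφdef, ContinuousLinearMap.add_apply, mul_add]
    exact integral_add (hint a) (hint b)
  have φ_sub : ∀ a b : X →L[ℝ] ℝ, φ (a - b) = φ a - φ b := by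
    intro a b
    simp only [hφdef, ContinuousLinearMap.sub_apply, mul_sub]
    exact integral_sub (hint a) (hint b)
  have φ_smul : ∀ (c : ℝ) (a : X →L[ℝ] ℝ), φ (c • a) = c * φ a := by
    intro c a
    simp only [hφdef, ContinuousLinearMap.smul_apply, smul_eq_mul]
    rw [← integral_const_mul]
    congr 1
    funext x
    ring
  have φ_zero : φ 0 = 0 := by simp [hφdef]
  -- key sequential lemma
  have Bcore : ∀ (u : ℕ → X →L[ℝ] ℝ) (u' : X →L[ℝ] ℝ) (c : ℝ), 0 < c →
      (∀ n, ‖u n‖ ≤ c) → (∀ n, φ (u n) = 0) →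
      (∀ x : X, Tendsto (fun n => u n x) atTop (𝓝 (u' x))) → φ u' = 0 := by
    intro u u' c hc hbd hker0 hconv
    set g : ℕ → WeakDual ℝ X := fun n => StrongDual.toWeakDual (c⁻¹ • u n) with hg
    set g' : WeakDual ℝ X := StrongDual.toWeakDual (c⁻¹ • u') with hg'
    have h1 : ∀ n, ‖WeakDual.toStrongDual (g n)‖ ≤ 1 := by
      intro n
      have h1a : ‖c⁻¹ • u n‖ ≤ 1 := by
        refine (norm_smul_le c⁻¹ (u n)).trans ?_
        rw [norm_inv, Real.norm_eq_abs, abs_of_pos hc]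
        calc c⁻¹ * ‖u n‖ ≤ c⁻¹ * c :=
              mul_le_mul_of_nonneg_left (hbd n) (le_of_lt (inv_pos.2 hc))
        _ = 1 := inv_mul_cancel₀ (ne_of_gt hc)
      simpa [hg] using h1a
    have h2 : ∀ n, ∫ x, f x * g n x ∂μ = 0 := by
      intro n
      have h2a : (∫ x, f x * (g n) x ∂μ) = φ (c⁻¹ • u n) := rfl
      rw [h2a, φ_smul, hker0 n, mul_zero]
    have h3 : Tendsto g atTop (𝓝 g') := by
      rw [tendsto_iff_forall_eval_tendsto_topDualPairing]
      intro x
      have ha : ∀ n, topDualPairing ℝ X (g n) x = c⁻¹ * u n x := fun n => rfl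
      have hb : topDualPairing ℝ X g' x = c⁻¹ * u' x := rfl
      simp only [ha, hb]
      exact (hconv x).const_mul _
    have h4 := hker g g' h1 h2 h3
    have h5 : (∫ x, f x * g' x ∂μ) = c⁻¹ * φ u' := by
      have h5a : (∫ x, f x * g' x ∂μ) = φ (c⁻¹ • u') := rfl
      rw [h5a, φ_smul]
    rw [h5] at h4
    rcases mul_eq_zero.1 h4 with h | h
    · exact absurd h (inv_ne_zero (ne_of_gt hc))
    · exact h
  -- trivial case
  by_cases hz : ∀ x' : X →L[ℝ] ℝ, φ x' = 0
  · exact ⟨0, fun x' => by rw [map_zero, ← hz x']⟩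
  push_neg at hz
  obtain ⟨e₀, he₀⟩ := hz
  set e : X →L[ℝ] ℝ := (φ e₀)⁻¹ • e₀ with he_def
  have he : φ e = 1 := by
    rw [he_def, φ_smul, inv_mul_cancel₀ he₀]
  -- dense sequence
  have hXne : Nonempty X := ⟨0⟩
  set v : ℕ → X := TopologicalSpace.denseSeq X with hv_def
  have hv : DenseRange v := TopologicalSpace.denseRange_denseSeq X
  -- Step C: near-annihilator bound
  have claim : ∀ ε : ℝ, 0 < ε → ∃ N : ℕ, ∀ x' : X →L[ℝ] ℝ, ‖x'‖ ≤ 1 →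
      (∀ i < N, x' (v i) = 0) → |φ x'| ≤ ε := by
    intro ε hε
    by_contra hcon
    push_neg at hcon
    choose u hu1 hu2 hu3 using hcon
    -- pointwise convergence to 0
    have hptw : ∀ x : X, Tendsto (fun n => u n x) atTop (𝓝 0) := by
      intro x
      rw [Metric.tendsto_atTop]
      intro δ hδ
      obtain ⟨i, hi⟩ := hv.exists_dist_lt x hδ
      refine ⟨i + 1, fun n hn => ?_⟩
      have h0 : u n (v i) = 0 := hu2 n i (by omega)
      have hux : u n x = u n (x - v i) := by
        rw [map_sub, h0, sub_zero]
      rw [Real.dist_eq, sub_zero, hux]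
      calc |u n (x - v i)| ≤ ‖u n‖ * ‖x - v i‖ := (u n).le_opNorm _
        _ ≤ 1 * ‖x - v i‖ := mul_le_mul_of_nonneg_right (hu1 n) (norm_nonneg _)
        _ = dist x (v i) := by rw [one_mul, dist_eq_norm]
        _ < δ := hi
    have hφu : ∀ n, φ (u n) ≠ 0 := by
      intro n h
      have := hu3 n
      rw [h, abs_zero] at this
      linarith
    set w : ℕ → X →L[ℝ] ℝ := fun n => (φ (u n))⁻¹ • u n - e with hw_def
    have hw0 : ∀ n, φ (w n) = 0 := by
      intro n
      rw [hw_def]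
      simp only
      rw [φ_sub, φ_smul, inv_mul_cancel₀ (hφu n), he, sub_self]
    have habs : ∀ n, |(φ (u n))⁻¹| ≤ ε⁻¹ := by
      intro n
      rw [abs_inv]
      exact inv_anti₀ hε (le_of_lt (hu3 n))
    have hwbd : ∀ n, ‖w n‖ ≤ ε⁻¹ + ‖e‖ := by
      intro n
      rw [hw_def]
      refine (norm_sub_le _ _).trans ?_
      have hs : ‖(φ (u n))⁻¹ • u n‖ ≤ ε⁻¹ := by
        refine (norm_smul_le ((φ (u n))⁻¹) (u n)).trans ?_
        rw [Real.norm_eq_abs]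
        calc |(φ (u n))⁻¹| * ‖u n‖ ≤ ε⁻¹ * 1 :=
          mul_le_mul (habs n) (hu1 n) (norm_nonneg _) (le_of_lt (inv_pos.2 hε))
        _ = ε⁻¹ := mul_one _
      linarith
    have hwc : ∀ x : X, Tendsto (fun n => w n x) atTop (𝓝 ((-e) x)) := by
      intro x
      have h1 : Tendsto (fun n => (φ (u n))⁻¹ * u n x) atTop (𝓝 0) := by
        apply squeeze_zero_norm (a := fun n : ℕ => ε⁻¹ * |u n x|)
        · intro n
          rw [Real.norm_eq_abs, abs_mul]
          exact mul_le_mul_of_nonneg_right (habs n) (abs_nonneg _)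
        · have h := ((hptw x).abs).const_mul ε⁻¹
          simpa using h
      have hwapp : ∀ n, w n x = (φ (u n))⁻¹ * u n x - e x := by
        intro n; simp [hw_def]
      simp only [hwapp]
      have h2 := h1.sub (tendsto_const_nhds (x := e x))
      simpa using h2
    have hMpos : 0 < ε⁻¹ + ‖e‖ := by positivity
    have hcontr := Bcore w (-e) (ε⁻¹ + ‖e‖) hMpos hwbd hw0 hwc
    have hnegone : φ (-e) = -1 := by
      have hmo : (-e : X →L[ℝ] ℝ) = (-1 : ℝ) • e := (neg_one_smul ℝ e).symm
      rw [hmo, φ_smul, he]; ring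
    rw [hnegone] at hcontr
    norm_num at hcontr
  -- the linear map version of φ
  set Φ : (X →L[ℝ] ℝ) →ₗ[ℝ] ℝ :=
    { toFun := φ
      map_add' := φ_add
      map_smul' := fun c a => by simpa using φ_smul c a } with hΦ
  have hΦapp : ∀ x' : X →L[ℝ] ℝ, Φ x' = φ x' := fun _ => rfl
  -- Step D: approximation by elements of X
  have approx : ∀ n : ℕ, ∃ y : X, ∀ x' : X →L[ℝ] ℝ,
      |φ x' - x' y| ≤ (1 / (n + 1)) * ‖x'‖ := by
    intro n
    have hεpos : (0:ℝ) < 1 / (n + 1) := by positivity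
    obtain ⟨N, hN⟩ := claim (1 / (n + 1)) hεpos
    have hPbd : ∀ x' : X →L[ℝ] ℝ, (∀ i : Fin N, x' (v i) = 0) →
        |Φ x'| ≤ (1 / (n + 1)) * ‖x'‖ := by
      intro x' hx'
      rw [hΦapp]
      rcases eq_or_ne x' 0 with h | h
      · subst h
        simp [φ_zero]
      · have hn0 : ‖x'‖ ≠ 0 := norm_ne_zero_iff.2 h
        have hnpos : 0 < ‖x'‖ := norm_pos_iff.2 h
        have hsc := hN (‖x'‖⁻¹ • x')
          (by rw [norm_smul ‖x'‖⁻¹ x', norm_inv, norm_norm, inv_mul_cancel₀ hn0])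
          (by intro i hi
              simp only [ContinuousLinearMap.smul_apply, smul_eq_mul]
              rw [hx' ⟨i, hi⟩, mul_zero])
        rw [φ_smul, abs_mul, abs_inv, abs_of_pos hnpos] at hsc
        calc |φ x'| = ‖x'‖ * (‖x'‖⁻¹ * |φ x'|) := by
              field_simp
        _ ≤ ‖x'‖ * (1 / (n + 1)) := mul_le_mul_of_nonneg_left hsc (norm_nonneg _)
        _ = (1 / (n + 1)) * ‖x'‖ := mul_comm _ _
    obtain ⟨y, hy⟩ := dual_approx (fun i : Fin N => v i) Φ (le_of_lt hεpos) hPbd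
    exact ⟨y, fun x' => by simpa [hΦapp] using hy x'⟩
  choose y hy using approx
  have hcauchy : CauchySeq y := by
    refine cauchySeq_of_le_tendsto_0 (fun N => 2 / (N + 1)) (fun m k N hm hk => ?_) ?_
    · rw [dist_eq_norm]
      refine NormedSpace.norm_le_dual_bound ℝ _ (by positivity) (fun x' => ?_)
      have hm' : (1:ℝ) / (m + 1) ≤ 1 / (N + 1) := by
        apply one_div_le_one_div_of_le (by positivity)
        exact_mod_cast Nat.succ_le_succ hm
      have hk' : (1:ℝ) / (k + 1) ≤ 1 / (N + 1) := by
        apply one_div_le_one_div_of_le (by positivity)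
        exact_mod_cast Nat.succ_le_succ hk
      have hsplit : x' (y m - y k) = (x' (y m) - φ x') + (φ x' - x' (y k)) := by
        rw [map_sub]; ring
      rw [Real.norm_eq_abs, hsplit]
      calc |(x' (y m) - φ x') + (φ x' - x' (y k))|
          ≤ |x' (y m) - φ x'| + |φ x' - x' (y k)| := abs_add_le _ _
        _ = |φ x' - x' (y m)| + |φ x' - x' (y k)| := by rw [abs_sub_comm]
        _ ≤ (1 / (m + 1)) * ‖x'‖ + (1 / (k + 1)) * ‖x'‖ := add_le_add (hy m x') (hy k x')
        _ ≤ (1 / (N + 1)) * ‖x'‖ + (1 / (N + 1)) * ‖x'‖ :=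
            add_le_add (mul_le_mul_of_nonneg_right hm' (norm_nonneg _))
              (mul_le_mul_of_nonneg_right hk' (norm_nonneg _))
        _ = 2 / (N + 1) * ‖x'‖ := by ring
    · have h := tendsto_one_div_add_atTop_nhds_zero_nat (𝕜 := ℝ)
      have h2 := h.const_mul (2:ℝ)
      simp only [mul_zero] at h2
      convert h2 using 2 with N
      ring
  obtain ⟨z, hz⟩ := cauchySeq_tendsto_of_complete hcauchy
  refine ⟨z, fun x' => ?_⟩
  have h1 : Tendsto (fun n => x' (y n)) atTop (𝓝 (x' z)) :=
    (x'.continuous.tendsto z).comp hz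
  have h2 : Tendsto (fun n => x' (y n)) atTop (𝓝 (φ x')) := by
    rw [tendsto_iff_dist_tendsto_zero]
    apply squeeze_zero (fun n => dist_nonneg) (g := fun n : ℕ => (1 / (n + 1)) * ‖x'‖)
    · intro n
      rw [Real.dist_eq, abs_sub_comm]
      exact hy n x'
    · have h := tendsto_one_div_add_atTop_nhds_zero_nat (𝕜 := ℝ)
      have h3 := h.mul_const ‖x'‖
      simpa using h3
  exact tendsto_nhds_unique h1 h2
end

section
/- Let H, H_∞ be real Hilbert spaces, V: D(V) ⊆ H_∞ → H a densely defined closable linear operator, and for a probability space (X, μ) let 𝕍 act on simple functions F = Σ_j F_j h_j (F_j ∈ C_b(X), h_j ∈ D(V)) by (𝕍F)(x) = V(F(x)). Then 𝕍 is closable as an operator from L²(X, μ; H_∞) to L²(X, μ; H). -/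
/-!
For `v` in the domain of the adjoint `V†`, the identity `⟪(𝕍F)(x), v⟫ = ⟪F(x), V† v⟫` holds
pointwise, so `⟪G, v⟫` is the `L²`-limit of `⟪𝕍Fₙ, v⟫ = ⟪Fₙ, V† v⟫ → 0` and vanishes a.e.
Closability of `V` makes `V†` densely defined, and an a.e.-separably-valued function that is
a.e. orthogonal to every vector of a dense set vanishes a.e.
-/

open MeasureTheory BoundedContinuousFunction Filter Topology Set TopologicalSpace

theorem TopologicalSpace.IsSeparable.exists_countable_subset_closure_of_dense
    {X : Type*} [PseudoMetricSpace X] {S t : Set X} (ht : IsSeparable t) (hS : Dense S) :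
    ∃ S' ⊆ S, S'.Countable ∧ t ⊆ closure S' := by
  obtain ⟨d, hdc, htd⟩ := ht
  have := hdc.to_subtype
  have hnear : ∀ (p : d) (n : ℕ), ∃ v ∈ S, dist (p : X) v < 1 / (n + 1) := fun p n =>
    hS.exists_dist_lt p Nat.one_div_pos_of_nat
  choose v hvS hv using hnear
  refine ⟨range (Function.uncurry v), range_subset_iff.2 fun _ => hvS _ _, countable_range _,
    htd.trans (closure_minimal (fun p hp => Metric.mem_closure_iff.2 fun ε hε => ?_)
      isClosed_closure)⟩
  obtain ⟨n, hn⟩ := exists_nat_one_div_lt hε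
  exact ⟨v ⟨p, hp⟩ n, mem_range_self (f := Function.uncurry v) (⟨p, hp⟩, n),
    (hv ⟨p, hp⟩ n).trans hn⟩

theorem BoundedContinuousFunction.aestronglyMeasurable_sum_smul_const {X E ι : Type*}
    [TopologicalSpace X] [MeasurableSpace X] [OpensMeasurableSpace X] [NormedAddCommGroup E]
    [NormedSpace ℝ E] [Fintype ι] (μ : Measure X) (φ : ι → X →ᵇ ℝ) (c : ι → E) :
    AEStronglyMeasurable (fun x => ∑ j, φ j x • c j) μ :=
  (Finset.stronglyMeasurable_fun_sum _ fun j _ =>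
    (φ j).continuous.stronglyMeasurable.smul_const (c j)).aestronglyMeasurable

section InnerProduct

variable {𝕜 α E E' : Type*} [RCLike 𝕜] [NormedAddCommGroup E] [InnerProductSpace 𝕜 E]
  [NormedAddCommGroup E'] [InnerProductSpace 𝕜 E'] [MeasurableSpace α] {μ : Measure α}

theorem ae_eq_zero_of_forall_inner_of_dense {S : Set E} (hS : Dense S) {f : α → E}
    (hf : AEStronglyMeasurable f μ) (h : ∀ v ∈ S, (fun x => inner 𝕜 (f x) v) =ᵐ[μ] 0) :
    f =ᵐ[μ] 0 := by
  obtain ⟨t, ht, hft⟩ := hf.isSeparable_ae_range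
  obtain ⟨S', hS'S, hS'c, htS'⟩ := ht.exists_countable_subset_closure_of_dense hS
  have hS' : ∀ᵐ x ∂μ, ∀ v ∈ S', inner 𝕜 (f x) v = 0 :=
    (ae_ball_iff hS'c).2 fun v hv => h v (hS'S hv)
  filter_upwards [hS', hft] with x hx hxt
  have hclosed : IsClosed {v | inner 𝕜 (f x) v = 0} :=
    isClosed_eq (continuous_const.inner continuous_id) continuous_const
  exact inner_self_eq_zero.1 (closure_minimal hx hclosed (htS' hxt))

theorem eLpNorm_inner_const_le (f : α → E) (c : E) (p : ENNReal) :
    eLpNorm (fun x => inner 𝕜 (f x) c) p μ ≤ ‖c‖ₑ * eLpNorm f p μ := by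
  refine (eLpNorm_le_nnreal_smul_eLpNorm_of_ae_le_mul
    (Eventually.of_forall fun x => ?_) p).trans_eq (ENNReal.smul_def _ _)
  rw [mul_comm]
  exact nnnorm_inner_le_nnnorm _ _

theorem ae_inner_eq_zero_of_tendsto_eLpNorm {p : ENNReal} (hp : 1 ≤ p) {F : ℕ → α → E}
    {U : ℕ → α → E'} {G : α → E'} {v : E'} {w : E} (hF : ∀ n, AEStronglyMeasurable (F n) μ)
    (hU : ∀ n, AEStronglyMeasurable (U n) μ) (hG : AEStronglyMeasurable G μ)
    (hF0 : Tendsto (fun n => eLpNorm (F n) p μ) atTop (𝓝 0))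
    (hUG : Tendsto (fun n => eLpNorm (fun x => U n x - G x) p μ) atTop (𝓝 0))
    (hUF : ∀ n x, inner 𝕜 (U n x) v = inner 𝕜 (F n x) w) :
    (fun x => inner 𝕜 (G x) v) =ᵐ[μ] 0 := by
  have hbound : ∀ n, eLpNorm (fun x => inner 𝕜 (G x) v) p μ ≤
      ‖v‖ₑ * eLpNorm (fun x => U n x - G x) p μ + ‖w‖ₑ * eLpNorm (F n) p μ := fun n => calc
    _ = eLpNorm ((fun x => inner 𝕜 (G x - U n x) v) + fun x => inner 𝕜 (F n x) w) p μ := by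
        congr 1; ext x; simp [inner_sub_left, hUF]
    _ ≤ eLpNorm (fun x => inner 𝕜 (G x - U n x) v) p μ
          + eLpNorm (fun x => inner 𝕜 (F n x) w) p μ :=
        eLpNorm_add_le ((hG.sub (hU n)).inner aestronglyMeasurable_const)
          ((hF n).inner aestronglyMeasurable_const) hp
    _ ≤ _ := by
        gcongr
        · exact (eLpNorm_inner_const_le _ _ _).trans_eq
            (congrArg (‖v‖ₑ * ·) (eLpNorm_sub_comm G (U n) p μ))
        · exact eLpNorm_inner_const_le _ _ _
  have hlim : Tendsto (fun n => ‖v‖ₑ * eLpNorm (fun x => U n x - G x) p μ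
      + ‖w‖ₑ * eLpNorm (F n) p μ) atTop (𝓝 0) := by
    simpa using (ENNReal.Tendsto.const_mul hUG (Or.inr enorm_ne_top)).add
      (ENNReal.Tendsto.const_mul hF0 (Or.inr enorm_ne_top))
  refine (eLpNorm_eq_zero_iff (hG.inner aestronglyMeasurable_const) ?_).1
    (le_antisymm (ge_of_tendsto' hlim hbound) zero_le)
  exact (zero_lt_one.trans_le hp).ne'

end InnerProduct

namespace LinearPMap

variable {𝕜 E F : Type*} [RCLike 𝕜] [NormedAddCommGroup E] [InnerProductSpace 𝕜 E]
  [NormedAddCommGroup F] [InnerProductSpace 𝕜 F] [CompleteSpace E] [CompleteSpace F]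
  {T : E →ₗ.[𝕜] F}

theorem zero_mem_closure_graph_of_mem_orthogonal_adjoint_domain {k : F}
    (hk : k ∈ (T†.domain)ᗮ) : ((0 : E), k) ∈ T.graph.topologicalClosure := by
  set e := WithLp.prodContinuousLinearEquiv 2 𝕜 E F
  rw [← SetLike.mem_coe, Submodule.topologicalClosure_coe]
  suffices e.symm (0, k) ∈ _root_.closure (e ⁻¹' T.graph) by
    rwa [← e.preimage_closure, mem_preimage, e.apply_symm_apply] at this
  have hS : e ⁻¹' T.graph = (T.graph.comap (e : WithLp 2 (E × F) →ₗ[𝕜] E × F)) := rfl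
  rw [hS, ← Submodule.topologicalClosure_coe, ← Submodule.orthogonal_orthogonal_eq_closure,
    SetLike.mem_coe, Submodule.mem_orthogonal]
  intro w hw
  have hw_graph : ∀ x : T.domain, inner 𝕜 (x : E) w.fst + inner 𝕜 (T x) w.snd = 0 := fun x =>
    hw (e.symm ((x : E), T x)) (by simp [T.mem_graph x])
  -- `w ⊥ graph T` says exactly that `T† w.snd = -w.fst`.
  have hw_snd : w.snd ∈ T†.domain := by
    refine mem_adjoint_domain_of_exists _ ⟨-w.fst, fun x => ?_⟩
    rw [inner_neg_left, ← inner_conj_symm, eq_neg_of_add_eq_zero_left (hw_graph x),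
      RingHom.map_neg, neg_neg, inner_conj_symm]
  change inner 𝕜 w.fst 0 + inner 𝕜 w.snd k = 0
  rw [inner_zero_right, zero_add]
  exact (Submodule.mem_orthogonal _ _).1 hk _ hw_snd

theorem IsClosable.dense_adjoint_domain (hT : T.IsClosable) :
    Dense (T†.domain : Set F) := by
  rw [Submodule.dense_iff_topologicalClosure_eq_top, Submodule.topologicalClosure_eq_top_iff,
    Submodule.eq_bot_iff]
  intro k hk
  obtain ⟨S, hS⟩ := hT
  have h0k := zero_mem_closure_graph_of_mem_orthogonal_adjoint_domain hk
  rw [hS] at h0k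
  exact S.graph_fst_eq_zero_snd h0k rfl

end LinearPMap

open LinearPMap in
theorem stmt14_general {Hinf H X : Type*}
    [NormedAddCommGroup Hinf] [InnerProductSpace ℝ Hinf] [CompleteSpace Hinf]
    [NormedAddCommGroup H] [InnerProductSpace ℝ H] [CompleteSpace H]
    [TopologicalSpace X] [MeasurableSpace X] [BorelSpace X]
    (μ : Measure X)
    (V : Hinf →ₗ.[ℝ] H) (hdense : Dense (V.domain : Set Hinf)) (hclos : V.IsClosable)
    (F : ℕ → X → Hinf) (VF : ℕ → X → H)
    (hform : ∀ n, ∃ (m : ℕ) (φ : Fin m → (X →ᵇ ℝ)) (h : Fin m → V.domain),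
      (F n = fun x => ∑ j, φ j x • ((h j : Hinf))) ∧
      (VF n = fun x => ∑ j, φ j x • V (h j)))
    (G : X → H) (hG : MemLp G 2 μ)
    (hF0 : Filter.Tendsto (fun n => eLpNorm (F n) 2 μ) Filter.atTop (nhds 0))
    (hVFG : Filter.Tendsto (fun n => eLpNorm (fun x => VF n x - G x) 2 μ)
      Filter.atTop (nhds 0)) :
    G =ᵐ[μ] 0 := by
  have hF : ∀ n, AEStronglyMeasurable (F n) μ := fun n => by
    obtain ⟨m, φ, h, hFn, -⟩ := hform n
    exact hFn ▸ aestronglyMeasurable_sum_smul_const μ φ _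
  have hVF : ∀ n, AEStronglyMeasurable (VF n) μ := fun n => by
    obtain ⟨m, φ, h, -, hVFn⟩ := hform n
    exact hVFn ▸ aestronglyMeasurable_sum_smul_const μ φ _
  refine ae_eq_zero_of_forall_inner_of_dense (𝕜 := ℝ) hclos.dense_adjoint_domain hG.1
    fun v hv => ?_
  refine ae_inner_eq_zero_of_tendsto_eLpNorm one_le_two hF hVF hG.1 hF0 hVFG
    (w := V† ⟨v, hv⟩) fun n x => ?_
  obtain ⟨m, φ, h, hFn, hVFn⟩ := hform n
  have hVsum : ∑ j, φ j x • V (h j) = V (∑ j, φ j x • h j) := by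
    simp only [← LinearPMap.map_smul]
    exact (map_sum V.toFun _ _).symm
  have hsum : ∑ j, φ j x • (h j : Hinf) = ↑(∑ j, φ j x • h j) := by simp
  simp only [hFn, hVFn, hVsum, hsum]
  exact (adjoint_isFormalAdjoint hdense).symm _ ⟨v, hv⟩

/-- Let `V : D(V) ⊆ H∞ → H` be a densely defined closable operator between real Hilbert
spaces and `μ` a Borel probability measure on `X`. The operator `𝕍`, acting on simple
functions `F = Σ_j F_j h_j` (with `F_j` bounded continuous and `h_j ∈ D(V)`) by
`(𝕍F)(x) = V(F(x))`, is closable from `L²(X,μ;H∞)` to `L²(X,μ;H)`: if `Fₙ → 0` in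
`L²(X,μ;H∞)` and `𝕍Fₙ → G` in `L²(X,μ;H)`, then `G = 0` `μ`-a.e. -/
theorem stmt14 {Hinf H X : Type*}
    [NormedAddCommGroup Hinf] [InnerProductSpace ℝ Hinf] [CompleteSpace Hinf]
    [NormedAddCommGroup H] [InnerProductSpace ℝ H] [CompleteSpace H]
    [TopologicalSpace X] [MeasurableSpace X] [BorelSpace X]
    (μ : Measure X) [IsProbabilityMeasure μ]
    (V : Hinf →ₗ.[ℝ] H) (hdense : Dense (V.domain : Set Hinf)) (hclos : V.IsClosable)
    (F : ℕ → X → Hinf) (VF : ℕ → X → H)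
    (hform : ∀ n, ∃ (m : ℕ) (φ : Fin m → (X →ᵇ ℝ)) (h : Fin m → V.domain),
      (F n = fun x => ∑ j, φ j x • ((h j : Hinf))) ∧
      (VF n = fun x => ∑ j, φ j x • V (h j)))
    (G : X → H) (hG : MemLp G 2 μ)
    (hF0 : Filter.Tendsto (fun n => eLpNorm (F n) 2 μ) Filter.atTop (nhds 0))
    (hVFG : Filter.Tendsto (fun n => eLpNorm (fun x => VF n x - G x) 2 μ)
      Filter.atTop (nhds 0)) :
    G =ᵐ[μ] 0 :=
  stmt14_general μ V hdense hclos F VF hform G hG hF0 hVFG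
end
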